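/- arXiv:1710.03404 — 5 statements merged into one kernel-verified Lean document; each statement's English description precedes it below -/
import Mathlib

section
/- Let E be a left D-module such that every D-linear endomorphism of E is multiplication by a scalar in K (i.e. the natural map K → End_D(E) is bijective). Then for every R ∈ Art_K and every deformation (F, θ) of E over R: (1) the natural ring homomorphism R → End_{D_R}(F) sending r to r·id_F is bijective; and (2) every D_R-linear automorphism u of F satisfying θ ∘ u = θ equals r·id_F for some r ∈ 1 + m_R. -/
/-!
Filter `F` by the submodules `I • F`, `I` an ideal of `R`. Suppose `ψ` is `D`-linear and `ψ - r`
maps `F` into `(I + Ra) • F`, where `m a ⊆ I` and `a ∉ I`. By flatness, `a x ∈ I • F` forces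
`x ∈ m • F`, so `ψ - r` induces a `D`-linear endomorphism of `F / m F ≅ E`, i.e. a scalar `c`, and
then `ψ - (r + c a)` maps `F` into `I • F`. As `m` is nilpotent, every proper ideal `I` has such an
element `a`, and Noetherian induction descends from `I = R` to `I = 0`. The same flatness argument
applied to a socle element of `R` shows that `F` is faithful, which gives uniqueness.
-/

universe u v w w'

open IsLocalRing TensorProduct

theorem smul_mem_smul_top_of_span_mul_le {R M : Type*} [CommRing R] [AddCommGroup M]
    [Module R M] {I J : Ideal R} {a : R} (h : Ideal.span {a} * I ≤ J) {y : M}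
    (hy : y ∈ I • (⊤ : Submodule R M)) : a • y ∈ J • (⊤ : Submodule R M) := by
  have := Submodule.smul_mem_smul (Ideal.mem_span_singleton_self a) hy
  rw [← Submodule.mul_smul] at this
  exact Submodule.smul_mono_left h this

theorem LinearMap.map_mem_smul_top_of_range_le {R M N : Type*} [CommRing R] [AddCommGroup M]
    [Module R M] [AddCommGroup N] [Module R N] {I I' J : Ideal R} (f : M →ₗ[R] N)
    (hf : LinearMap.range f ≤ I • (⊤ : Submodule R N)) (h : I * I' ≤ J) {x : M}
    (hx : x ∈ I' • (⊤ : Submodule R M)) : f x ∈ J • (⊤ : Submodule R N) := by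
  have hmap : (I' • ⊤ : Submodule R M).map f ≤ J • ⊤ := calc
    _ = I' • LinearMap.range f := by rw [Submodule.map_smul'', LinearMap.range_eq_map]
    _ ≤ I' • I • ⊤ := Submodule.smul_mono le_rfl hf
    _ = (I * I') • ⊤ := by rw [← Submodule.mul_smul, mul_comm]
    _ ≤ J • ⊤ := Submodule.smul_mono_left h
  exact hmap (Submodule.mem_map_of_mem hx)

theorem Ideal.exists_mul_notMem_and_span_mul_le {R : Type*} [CommRing R] {N I : Ideal R}
    (hN : IsNilpotent N) {b : R} (hb : b ∉ I) : ∃ t : R, t * b ∉ I ∧ span {t * b} * N ≤ I := by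
  obtain ⟨n, hn⟩ := hN
  suffices ∀ n b, b ∉ I → span {b} * N ^ n ≤ I → ∃ t : R, t * b ∉ I ∧ span {t * b} * N ≤ I from
    this n b hb (by simp [hn])
  intro n
  induction n with
  | zero => exact fun b hb hle => absurd (hle (by simp)) hb
  | succ n ih =>
    intro b hb hle
    by_cases hbN : span {b} * N ≤ I
    · exact ⟨1, by simpa using hb, by simpa using hbN⟩
    obtain ⟨p, hpN, hpb⟩ : ∃ p ∈ N, b * p ∉ I := by
      simpa [span_singleton_mul_le_iff] using hbN
    have hpb' : span {p * b} * N ^ n ≤ I := by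
      refine span_singleton_mul_le_iff.mpr fun z hz => ?_
      rw [mul_comm p, mul_assoc]
      exact span_singleton_mul_le_iff.mp hle _ (pow_succ' N n ▸ mul_mem_mul hpN hz)
    obtain ⟨t, ht, htN⟩ := ih (p * b) (by rwa [mul_comm]) hpb'
    exact ⟨t * p, by rwa [mul_assoc], by rwa [mul_assoc]⟩

theorem Module.Flat.mem_colon_smul_top_of_smul_mem {R M : Type*} [CommRing R] [AddCommGroup M]
    [Module R M] [Module.Flat R M] {J : Ideal R} {a : R} {x : M}
    (hx : a • x ∈ J • (⊤ : Submodule R M)) : x ∈ J.colon {a} • (⊤ : Submodule R M) := by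
  set P : Ideal R := J.colon {a}
  have hP : P = Submodule.comap (LinearMap.mulRight R a) J := by
    ext c; simp [P]
  let v : (R ⧸ P) →ₗ[R] R ⧸ J := P.mapQ J (LinearMap.mulRight R a) hP.le
  have hv : Function.Injective v := by
    rw [← LinearMap.ker_eq_bot, Submodule.ker_mapQ, ← hP, Submodule.mkQ_map_self]
  have hzero : v.rTensor M (Ideal.Quotient.mk P 1 ⊗ₜ x) = 0 := by
    apply (quotTensorEquivQuotSMul M J).injective
    have hv1 : v (Ideal.Quotient.mk P 1) = Ideal.Quotient.mk J (1 * a) := rfl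
    rw [LinearMap.rTensor_tmul, hv1, one_mul, quotTensorEquivQuotSMul_mk_tmul, map_zero]
    exact (Submodule.Quotient.mk_eq_zero _).mpr hx
  have h := Module.Flat.rTensor_preserves_injective_linearMap v hv (hzero.trans (map_zero _).symm)
  simpa using congrArg (quotTensorEquivQuotSMul M P) h

theorem IsLocalRing.mem_maximalIdeal_smul_top_of_smul_mem {R M : Type*} [CommRing R]
    [IsLocalRing R] [AddCommGroup M] [Module R M] [Module.Flat R M] {J : Ideal R} {a : R} {x : M}
    (ha : a ∉ J) (hx : a • x ∈ J • (⊤ : Submodule R M)) :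
    x ∈ maximalIdeal R • (⊤ : Submodule R M) :=
  have hcolon : J.colon {a} ≠ ⊤ := fun h => ha (by simpa using (Ideal.eq_top_iff_one _).mp h)
  Submodule.smul_mono_left (le_maximalIdeal hcolon) (Module.Flat.mem_colon_smul_top_of_smul_mem hx)

theorem IsLocalRing.eq_zero_of_forall_smul_eq_zero {R M : Type*} [CommRing R] [IsLocalRing R]
    [IsArtinianRing R] [AddCommGroup M] [Module R M] [Module.Flat R M] {x₀ : M}
    (hx₀ : x₀ ∉ maximalIdeal R • (⊤ : Submodule R M)) {c : R} (hc : ∀ x : M, c • x = 0) :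
    c = 0 := by
  by_contra hc0
  obtain ⟨t, ht, -⟩ := Ideal.exists_mul_notMem_and_span_mul_le
    ((isArtinianRing_iff_isNilpotent_maximalIdeal R).mp ‹_›) (I := ⊥) (b := c) hc0
  refine hx₀ (mem_maximalIdeal_smul_top_of_smul_mem ht ?_)
  rw [mul_smul, hc, smul_zero]
  exact zero_mem _

section Deformation

variable {K : Type*} [Field K] {D : Type*} [Ring D] [Algebra K D]
  {E : Type*} [AddCommGroup E] [Module K E] {s : D →ₐ[K] Module.End K E}

/-- `G` is a multivalued lift to `F` of a `D`-linear endomorphism of `E`. -/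
theorem exists_smul_of_equivariant_relation {F : Type*} [AddCommGroup F] [Module K F]
    {ρ : D → Module.End K F} {θ : F →ₗ[K] E}
    (hschur : ∀ f : Module.End K E, (∀ d : D, f * s d = s d * f) → ∃ c : K, ∀ e, f e = c • e)
    (hθD : ∀ (d : D) (x : F), θ (ρ d x) = s d (θ x)) (hsurj : Function.Surjective θ)
    (G : Submodule K (F × F)) (hGρ : ∀ d : D, ∀ p ∈ G, (ρ d p.1, ρ d p.2) ∈ G)
    (hGtotal : ∀ x, ∃ y, (x, y) ∈ G) (hGker : ∀ p ∈ G, θ p.1 = 0 → θ p.2 = 0) :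
    ∃ c : K, ∀ p ∈ G, θ p.2 = c • θ p.1 := by
  choose g hg using hGtotal
  have hfun : ∀ p ∈ G, ∀ q ∈ G, θ p.1 = θ q.1 → θ p.2 = θ q.2 := fun p hp q hq h => by
    simpa [sub_eq_zero] using hGker (p - q) (G.sub_mem hp hq) (by simpa [sub_eq_zero])
  let f₀ : E → E := fun e => θ (g (Function.surjInv hsurj e))
  have hf₀ : ∀ p ∈ G, f₀ (θ p.1) = θ p.2 := fun p hp =>
    hfun _ (hg _) p hp (Function.surjInv_eq hsurj _)
  let f : Module.End K E :=
    { toFun := f₀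
      map_add' := by
        intro e e'
        obtain ⟨⟨x, rfl⟩, ⟨x', rfl⟩⟩ := And.intro (hsurj e) (hsurj e')
        simpa [hf₀ _ (hg x), hf₀ _ (hg x')] using hf₀ _ (G.add_mem (hg x) (hg x'))
      map_smul' := by
        intro c e
        obtain ⟨x, rfl⟩ := hsurj e
        simpa [hf₀ _ (hg x)] using hf₀ _ (G.smul_mem c (hg x)) }
  obtain ⟨c, hc⟩ := hschur f fun d => LinearMap.ext fun e => by
    obtain ⟨x, rfl⟩ := hsurj e
    simpa [f, hθD, hf₀ _ (hg x)] using hf₀ _ (hGρ d _ (hg x))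
  exact ⟨c, fun p hp => (hf₀ p hp).symm.trans (hc _)⟩

variable {R : Type*} [CommRing R] [Algebra K R] [IsLocalRing R]
  {F : Type*} [AddCommGroup F] [Module K F] [Module R F] [IsScalarTower K R F] [Module.Flat R F]
  {ρF : D →ₐ[K] Module.End R F} {θ : F →ₗ[K] E}

theorem exists_range_sub_smul_one_le_of_le_sup_span
    (hschur : ∀ f : Module.End K E, (∀ d : D, f * s d = s d * f) → ∃ c : K, ∀ e, f e = c • e)
    (hθD : ∀ (d : D) (x : F), θ (ρF d x) = s d (θ x)) (hsurj : Function.Surjective θ)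
    (hker : ∀ x : F, θ x = 0 ↔ x ∈ maximalIdeal R • (⊤ : Submodule R F))
    {J : Ideal R} {a : R} (ha : a ∉ J) (hma : Ideal.span {a} * maximalIdeal R ≤ J)
    {φ : Module.End R F} (hφ : ∀ d : D, φ * ρF d = ρF d * φ)
    (hφJ : LinearMap.range φ ≤ (J ⊔ Ideal.span {a}) • (⊤ : Submodule R F)) :
    ∃ c : K, LinearMap.range (φ - (algebraMap K R c * a) • 1) ≤ J • (⊤ : Submodule R F) := by
  let L : F × F →ₗ[R] F := φ ∘ₗ LinearMap.fst R F F - a • LinearMap.snd R F F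
  let G : Submodule K (F × F) := ((J • ⊤ : Submodule R F).comap L).restrictScalars K
  have hG : ∀ p, p ∈ G ↔ φ p.1 - a • p.2 ∈ J • (⊤ : Submodule R F) := fun p => Iff.rfl
  have hφm : ∀ x ∈ maximalIdeal R • (⊤ : Submodule R F), φ x ∈ J • (⊤ : Submodule R F) :=
    fun x => φ.map_mem_smul_top_of_range_le hφJ
      (by rw [Ideal.sup_mul]; exact sup_le Ideal.mul_le_left hma)
  have htotal : ∀ x, ∃ y, (x, y) ∈ G := by
    intro x
    have hx := hφJ (LinearMap.mem_range_self φ x)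
    rw [Submodule.sup_smul, Submodule.ideal_span_singleton_smul, Submodule.mem_sup] at hx
    obtain ⟨j, hj, _, ⟨y, -, rfl⟩, hjy⟩ := hx
    exact ⟨y, (hG _).mpr (by simpa [← hjy] using hj)⟩
  have hρ : ∀ d : D, ∀ p ∈ G, (ρF d p.1, ρF d p.2) ∈ G := by
    intro d p hp
    have h := Submodule.smul_top_le_comap_smul_top J (ρF d) ((hG p).mp hp)
    rw [Submodule.mem_comap, map_sub, map_smul, ← Module.End.mul_apply, ← hφ d] at h
    exact (hG _).mpr h
  have hGker : ∀ p ∈ G, θ p.1 = 0 → θ p.2 = 0 := by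
    intro p hp h1
    refine (hker _).mpr (mem_maximalIdeal_smul_top_of_smul_mem ha ?_)
    simpa using Submodule.sub_mem _ (hφm _ ((hker _).mp h1)) ((hG p).mp hp)
  obtain ⟨c, hc⟩ := exists_smul_of_equivariant_relation (ρ := fun d => (ρF d).restrictScalars K)
    hschur hθD hsurj G hρ htotal hGker
  refine ⟨c, ?_⟩
  rintro _ ⟨x, rfl⟩
  obtain ⟨y, hy⟩ := htotal x
  have hyx : y - c • x ∈ maximalIdeal R • (⊤ : Submodule R F) := by
    rw [← hker, map_sub, map_smul, hc _ hy, sub_self]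
  have hsplit : (φ - (algebraMap K R c * a) • 1) x = (φ x - a • y) + a • (y - c • x) := by
    rw [LinearMap.sub_apply, LinearMap.smul_apply, Module.End.one_apply, mul_smul,
      algebraMap_smul, smul_sub, smul_comm a c]
    abel
  rw [hsplit]
  exact Submodule.add_mem _ ((hG _).mp hy) (smul_mem_smul_top_of_span_mul_le hma hyx)

theorem exists_range_sub_smul_one_le [IsArtinianRing R]
    (hschur : ∀ f : Module.End K E, (∀ d : D, f * s d = s d * f) → ∃ c : K, ∀ e, f e = c • e)
    (hθD : ∀ (d : D) (x : F), θ (ρF d x) = s d (θ x)) (hsurj : Function.Surjective θ)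
    (hker : ∀ x : F, θ x = 0 ↔ x ∈ maximalIdeal R • (⊤ : Submodule R F))
    (I : Ideal R) {φ : Module.End R F} (hφ : ∀ d : D, φ * ρF d = ρF d * φ) :
    ∃ r : R, LinearMap.range (φ - r • 1) ≤ I • (⊤ : Submodule R F) := by
  induction I using WellFoundedGT.induction with
  | _ I ih =>
    by_cases hI : I = ⊤
    · exact ⟨0, by simp [hI]⟩
    obtain ⟨a, ha, hma⟩ := Ideal.exists_mul_notMem_and_span_mul_le
      ((isArtinianRing_iff_isNilpotent_maximalIdeal R).mp ‹_›) ((Ideal.ne_top_iff_one I).mp hI)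
    rw [mul_one] at ha hma
    have hlt : I < I ⊔ Ideal.span {a} :=
      left_lt_sup.mpr fun h => ha (h (Ideal.mem_span_singleton_self a))
    obtain ⟨r, hr⟩ := ih _ hlt
    have hφr : ∀ d : D, (φ - r • 1) * ρF d = ρF d * (φ - r • 1) := fun d => by
      rw [sub_mul, mul_sub, hφ d, smul_mul_assoc, mul_smul_comm, one_mul, mul_one]
    obtain ⟨c, hc⟩ :=
      exists_range_sub_smul_one_le_of_le_sup_span hschur hθD hsurj hker ha hma hφr hr
    exact ⟨r + algebraMap K R c * a, by rwa [add_smul, ← sub_sub]⟩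

end Deformation

theorem stmt_2_general {K : Type u} [Field K]
    {D : Type v} [Ring D] [Algebra K D]
    {E : Type w} [AddCommGroup E] [Module K E]
    (s : D →ₐ[K] Module.End K E)
    (hschur : ∀ φ : Module.End K E, (∀ d : D, φ * s d = s d * φ) →
      ∃! c : K, ∀ x : E, φ x = c • x)
    {R : Type u} [CommRing R] [Algebra K R] [IsArtinianRing R] [IsLocalRing R]
    (ε : R →ₐ[K] K) (hε : RingHom.ker ε = IsLocalRing.maximalIdeal R)
    (F : Type w') [AddCommGroup F] [Module K F] [Module R F] [IsScalarTower K R F]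
    [Module.Flat R F]
    (ρF : D →ₐ[K] Module.End R F) (θ : F →ₗ[K] E)
    (hθR : ∀ (r : R) (x : F), θ (r • x) = ε r • θ x)
    (hθD : ∀ (d : D) (x : F), θ (ρF d x) = s d (θ x))
    (hsurj : Function.Surjective θ)
    (hker : ∀ x : F, θ x = 0 ↔ x ∈ IsLocalRing.maximalIdeal R • (⊤ : Submodule R F)) :
    (∀ ψ : Module.End R F, (∀ d : D, ψ * ρF d = ρF d * ψ) →
      ∃! r : R, ∀ x : F, ψ x = r • x) ∧
    (∀ u : F ≃ₗ[R] F, (∀ (d : D) (x : F), u (ρF d x) = ρF d (u x)) →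
      (∀ x : F, θ (u x) = θ x) →
      ∃ r : R, r - 1 ∈ IsLocalRing.maximalIdeal R ∧ ∀ x : F, u x = r • x) := by
  obtain ⟨e₀, he₀⟩ : ∃ e : E, e ≠ 0 := by
    by_contra! h
    obtain ⟨c, -, hc⟩ := hschur 0 fun d => by rw [zero_mul, mul_zero]
    exact zero_ne_one ((hc 0 fun x => by simp [h x]).trans (hc 1 fun x => by simp [h x]).symm)
  obtain ⟨x₀, rfl⟩ := hsurj e₀
  have hx₀ : x₀ ∉ maximalIdeal R • (⊤ : Submodule R F) := fun h => he₀ ((hker x₀).mpr h)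
  have hscalar : ∀ ψ : Module.End R F, (∀ d : D, ψ * ρF d = ρF d * ψ) →
      ∃! r : R, ∀ x : F, ψ x = r • x := by
    intro ψ hψ
    obtain ⟨r, hr⟩ := exists_range_sub_smul_one_le (fun f hf => (hschur f hf).exists)
      hθD hsurj hker ⊥ hψ
    rw [Submodule.bot_smul, le_bot_iff, LinearMap.range_eq_bot, sub_eq_zero] at hr
    refine ⟨r, fun x => by simp [hr], fun r' hr' => sub_eq_zero.mp ?_⟩
    exact eq_zero_of_forall_smul_eq_zero hx₀ fun x => by simp [sub_smul, ← hr', hr]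
  refine ⟨hscalar, fun u hu huθ => ?_⟩
  obtain ⟨r, hr, -⟩ := hscalar u fun d => LinearMap.ext (hu d)
  refine ⟨r, ?_, hr⟩
  have hεr : ε r = 1 :=
    smul_left_injective K he₀ (by simpa [← hθR, ← hr] using huθ x₀)
  rw [← hε, RingHom.mem_ker, map_sub, hεr, map_one, sub_self]

/-- Let `K` be a field of characteristic `0`, `D` an associative unital
`K`-algebra, and `E` a left `D`-module (given through its structure map
`s : D →ₐ[K] End_K E`) such that the natural map `K → End_D(E)` is bijective (every
`K`-endomorphism commuting with the `D`-action is a unique scalar).  Let `R` be an Artinian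
local `K`-algebra with residue field `K` (witnessed by `ε : R →ₐ[K] K` with kernel the maximal
ideal), and let `(F, θ)` be a deformation of `E` over `R`: `F` is a left `D_R`-module (given
through `ρF : D →ₐ[K] End_R F`) flat over `R`, and `θ : F → E` is `D_R`-linear (i.e. `K`-linear,
`ε`-semilinear over `R` and `D`-equivariant), surjective with kernel `m_R • F` (so that it
induces an isomorphism `K ⊗_R F ≅ E`).  Then:
(1) the natural ring homomorphism `R → End_{D_R}(F)`, `r ↦ r • id`, is bijective (every
`R`-endomorphism of `F` commuting with the `D`-action is a unique scalar `r ∈ R`); and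
(2) every `D_R`-linear automorphism `u` of `F` with `θ ∘ u = θ` is `r • id` for some
`r ∈ 1 + m_R`. -/
theorem stmt_2 {K : Type u} [Field K] [CharZero K]
    {D : Type v} [Ring D] [Algebra K D]
    {E : Type w} [AddCommGroup E] [Module K E]
    (s : D →ₐ[K] Module.End K E)
    (hschur : ∀ φ : Module.End K E, (∀ d : D, φ * s d = s d * φ) →
      ∃! c : K, ∀ x : E, φ x = c • x)
    {R : Type u} [CommRing R] [Algebra K R] [IsArtinianRing R] [IsLocalRing R]
    (ε : R →ₐ[K] K) (hε : RingHom.ker ε = IsLocalRing.maximalIdeal R)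
    (F : Type w') [AddCommGroup F] [Module K F] [Module R F] [IsScalarTower K R F]
    [Module.Flat R F]
    (ρF : D →ₐ[K] Module.End R F) (θ : F →ₗ[K] E)
    (hθR : ∀ (r : R) (x : F), θ (r • x) = ε r • θ x)
    (hθD : ∀ (d : D) (x : F), θ (ρF d x) = s d (θ x))
    (hsurj : Function.Surjective θ)
    (hker : ∀ x : F, θ x = 0 ↔ x ∈ IsLocalRing.maximalIdeal R • (⊤ : Submodule R F)) :
    (∀ ψ : Module.End R F, (∀ d : D, ψ * ρF d = ρF d * ψ) →
      ∃! r : R, ∀ x : F, ψ x = r • x) ∧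
    (∀ u : F ≃ₗ[R] F, (∀ (d : D) (x : F), u (ρF d x) = ρF d (u x)) →
      (∀ x : F, θ (u x) = θ x) →
      ∃ r : R, r - 1 ∈ IsLocalRing.maximalIdeal R ∧ ∀ x : F, u x = r • x) :=
  stmt_2_general s hschur ε hε F ρF θ hθR hθD hsurj hker
end

section
/- Let E be a left D-module satisfying: (i) End_D(E) is finite dimensional as a K-vector space; (ii) E is finitely presented as a left D-module; (iii) K̄ ⊗_K E is a simple module over the K̄-algebra K̄ ⊗_K D, where K̄ is an algebraic closure of K. Then every D-linear endomorphism of E is multiplication by a scalar in K; that is, the natural map K → End_D(E) is bijective. -/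
open scoped TensorProduct

/-!
Since `End_D(E)` is finite dimensional, `φ` is integral over `K`, so over the algebraically closed
field `L = K̄` its base change `φ_L` has a point `r` in its spectrum. As `φ_L` commutes with the
base-changed `D`-action, kernel and range of `r - φ_L` are stable subspaces, and simplicity of
`L ⊗ E` forces the non-invertible `r - φ_L` to vanish (Schur). Evaluating `φ_L = r` against the
`L`-linear forms on `L ⊗ E` induced by `K`-linear forms on `E` shows `r ∈ K` and `φ = r`.
-/

open Polynomial in
theorem spectrum.nonempty_of_isAlgClosed_of_isIntegral {𝕜 A : Type*} [Field 𝕜] [Ring A]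
    [Algebra 𝕜 A] [IsAlgClosed 𝕜] [Nontrivial A] {a : A} (ha : IsIntegral 𝕜 a) :
    (spectrum 𝕜 a).Nonempty := by
  obtain ⟨p, hp_monic, hp_eval⟩ := ha
  have h_nonunit : ¬IsUnit (aeval a p) := by
    rw [aeval_def, hp_eval]
    exact not_isUnit_zero
  rw [(IsAlgClosed.splits p).eq_prod_roots_of_monic hp_monic] at h_nonunit
  obtain ⟨k, hk, -⟩ := spectrum.exists_mem_of_not_isUnit_aeval_prod h_nonunit
  exact ⟨k, hk⟩

theorem Module.End.eq_zero_of_commute_of_not_isUnit {R M ι : Type*} [Ring R]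
    [AddCommGroup M] [Module R M] (T : ι → Module.End R M)
    (hT : ∀ p : Submodule R M, (∀ i, ∀ x ∈ p, T i x ∈ p) → p = ⊥ ∨ p = ⊤)
    {ψ : Module.End R M} (hψ : ∀ i, Commute ψ (T i)) (h_nonunit : ¬IsUnit ψ) : ψ = 0 := by
  have h_ker : ∀ i, ∀ x ∈ LinearMap.ker ψ, T i x ∈ LinearMap.ker ψ := fun i x hx => by
    rw [LinearMap.mem_ker] at hx ⊢
    rw [← Module.End.mul_apply, (hψ i).eq, Module.End.mul_apply, hx, map_zero]
  have h_range : ∀ i, ∀ x ∈ LinearMap.range ψ, T i x ∈ LinearMap.range ψ := by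
    rintro i - ⟨y, rfl⟩
    exact ⟨T i y, LinearMap.congr_fun (hψ i).eq y⟩
  rcases hT _ h_ker with h_inj | h_zero
  · rcases hT _ h_range with h_zero | h_surj
    · exact LinearMap.range_eq_bot.mp h_zero
    · exact absurd ((Module.End.isUnit_iff ψ).mpr
        ⟨LinearMap.ker_eq_bot.mp h_inj, LinearMap.range_eq_top.mp h_surj⟩) h_nonunit
  · exact LinearMap.ker_eq_top.mp h_zero

theorem LinearMap.exists_eq_smul_of_baseChange_eq_algebraMap {K L V : Type*} [Field K]
    [CommRing L] [Nontrivial L] [Algebra K L] [AddCommGroup V] [Module K V] {f : V →ₗ[K] V}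
    {r : L} (h : f.baseChange L = algebraMap L (Module.End L (L ⊗[K] V)) r) :
    ∃ c : K, f = c • 1 := by
  -- Each `K`-linear form `ℓ` on `V` extends to an `L`-linear form on `L ⊗ V`.
  have h_form : ∀ (ℓ : Module.Dual K V) (x : V),
      algebraMap K L (ℓ (f x)) = r * algebraMap K L (ℓ x) := fun ℓ x => by
    have h_tmul := LinearMap.congr_fun h ((1 : L) ⊗ₜ x)
    rw [LinearMap.baseChange_tmul, Module.algebraMap_end_apply] at h_tmul
    have := congrArg (LinearMap.liftBaseChange L (Algebra.linearMap K L ∘ₗ ℓ)) h_tmul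
    rw [map_smul, LinearMap.liftBaseChange_tmul, LinearMap.liftBaseChange_tmul] at this
    simpa using this
  rcases subsingleton_or_nontrivial V with hV | hV
  · exact ⟨0, Subsingleton.elim _ _⟩
  obtain ⟨v, hv⟩ := exists_ne (0 : V)
  obtain ⟨ℓ₀, hℓ₀⟩ := Module.Projective.exists_dual_eq_one K hv
  refine ⟨ℓ₀ (f v), LinearMap.ext fun x => ?_⟩
  have hr : r = algebraMap K L (ℓ₀ (f v)) := by simpa [hℓ₀] using (h_form ℓ₀ v).symm
  rw [← sub_eq_zero, ← Module.forall_dual_apply_eq_zero_iff K]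
  intro ℓ
  have h_eq := h_form ℓ x
  rw [hr, ← map_mul] at h_eq
  simp [(algebraMap K L).injective h_eq]

def Module.End.restrictScalarsAlgHom (K : Type*) {D E : Type*} [CommSemiring K] [Semiring D]
    [Algebra K D] [AddCommMonoid E] [Module K E] [Module D E] [IsScalarTower K D E] :
    Module.End D E →ₐ[K] Module.End K E :=
  .ofLinearMap (LinearMap.restrictScalarsₗ K D E E K) rfl fun _ _ => rfl

theorem Module.End.exists_eq_smul_of_isAlgClosed_baseChange {K L D E : Type*} [Field K]
    [Field L] [IsAlgClosed L] [Algebra K L] [Ring D] [Algebra K D] [AddCommGroup E] [Module K E]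
    [Module D E] [IsScalarTower K D E] [FiniteDimensional K (Module.End D E)]
    [Nontrivial (L ⊗[K] E)]
    (h_simple : ∀ p : Submodule L (L ⊗[K] E),
      (∀ d : D, ∀ x ∈ p, (Algebra.lsmul K K E d).baseChange L x ∈ p) → p = ⊥ ∨ p = ⊤)
    (φ : Module.End D E) : ∃ c : K, ∀ x : E, φ x = c • x := by
  let φL : Module.End L (L ⊗[K] E) := (φ.restrictScalars K).baseChange L
  let g : Module.End D E →ₐ[K] Module.End L (L ⊗[K] E) :=
    (Module.End.baseChangeHom K L E).comp (Module.End.restrictScalarsAlgHom K)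
  have h_integral_K : IsIntegral K (g φ) := (IsIntegral.of_finite K φ).map g
  have h_integral : IsIntegral L φL := h_integral_K.tower_top
  obtain ⟨r, hr⟩ := spectrum.nonempty_of_isAlgClosed_of_isIntegral h_integral
  have h_commute : ∀ d : D,
      Commute (algebraMap L _ r - φL) ((Algebra.lsmul K K E d).baseChange L) := by
    intro d
    have hφK : Commute (φ.restrictScalars K) (Algebra.lsmul K K E d) :=
      LinearMap.ext fun x => φ.map_smul d x
    have hφ : Commute φL ((Algebra.lsmul K K E d).baseChange L) :=
      hφK.map (Module.End.baseChangeHom K L E)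
    exact Commute.sub_left (R := Module.End L (L ⊗[K] E)) (Algebra.commute_algebraMap_left r _) hφ
  have h_scalar := (sub_eq_zero (G := Module.End L (L ⊗[K] E))).mp <|
    Module.End.eq_zero_of_commute_of_not_isUnit _ h_simple h_commute (spectrum.mem_iff.mp hr)
  obtain ⟨c, hc⟩ := LinearMap.exists_eq_smul_of_baseChange_eq_algebraMap h_scalar.symm
  exact ⟨c, LinearMap.congr_fun hc⟩

theorem stmt_3_general {K : Type u} [Field K]
    {D : Type v} [Ring D] [Algebra K D]
    {E : Type v} [AddCommGroup E] [Module K E] [Module D E] [IsScalarTower K D E]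
    (h1 : FiniteDimensional K (E →ₗ[D] E))
    (h3 : Nontrivial (AlgebraicClosure K ⊗[K] E) ∧
      ∀ p : Submodule (AlgebraicClosure K) (AlgebraicClosure K ⊗[K] E),
        (∀ d : D, ∀ x ∈ p,
          LinearMap.baseChange (AlgebraicClosure K) (Algebra.lsmul K K E d) x ∈ p) →
        p = ⊥ ∨ p = ⊤) :
    ∀ φ : E →ₗ[D] E, ∃! c : K, ∀ x : E, φ x = c • x := by
  obtain ⟨h_nontrivial, h_simple⟩ := h3
  have : Nontrivial E :=
    (subsingleton_or_nontrivial E).resolve_left fun _ => not_nontrivial _ h_nontrivial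
  intro φ
  obtain ⟨c, hc⟩ := Module.End.exists_eq_smul_of_isAlgClosed_baseChange h_simple φ
  refine ⟨c, hc, fun c' hc' => ?_⟩
  obtain ⟨x, hx⟩ := exists_ne (0 : E)
  exact smul_left_injective K hx ((hc' x).symm.trans (hc x))

/-- Let `K` be a field of characteristic `0`, `D` an associative unital
`K`-algebra and `E` a left `D`-module such that
(i) `End_D(E)` is finite dimensional over `K`;
(ii) `E` is finitely presented as a left `D`-module;
(iii) `K̄ ⊗_K E` is simple over `K̄ ⊗_K D` for an algebraic closure `K̄` of `K`
(simplicity of the base change is expressed as: the base change is nonzero and the only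
`K̄`-subspaces stable under the base-changed `D`-action are `⊥` and `⊤`).
Then every `D`-linear endomorphism of `E` is multiplication by a unique scalar in `K`;
i.e. the natural map `K → End_D(E)` is bijective. -/
theorem stmt_3 {K : Type u} [Field K] [CharZero K]
    {D : Type v} [Ring D] [Algebra K D]
    {E : Type v} [AddCommGroup E] [Module K E] [Module D E] [IsScalarTower K D E]
    (h1 : FiniteDimensional K (E →ₗ[D] E))
    (h2 : Module.FinitePresentation D E)
    (h3 : Nontrivial (AlgebraicClosure K ⊗[K] E) ∧
      ∀ p : Submodule (AlgebraicClosure K) (AlgebraicClosure K ⊗[K] E),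
        (∀ d : D, ∀ x ∈ p,
          LinearMap.baseChange (AlgebraicClosure K) (Algebra.lsmul K K E d) x ∈ p) →
        p = ⊥ ∨ p = ⊤) :
    ∀ φ : E →ₗ[D] E, ∃! c : K, ∀ x : E, φ x = c • x :=
  stmt_3_general h1 h3
end

section
/- Let E be a left D-module and K̄ an algebraic closure of K. The following are equivalent: (a) K̄ ⊗_K E is a simple module over K̄ ⊗_K D; (b) for every finite field extension L of K, L ⊗_K E is a simple module over L ⊗_K D. -/
open scoped TensorProduct

universe u v

/-!
Simplicity of `L ⊗_K E` only involves the `K`-linear endomorphisms by which `D` acts, so it is a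
property of an arbitrary family `T` of `K`-endomorphisms of `E`. For a tower `K ⊆ L ⊆ F` the map `L ⊗_K E → F ⊗_K E` is injective and
its image spans. A nonzero proper invariant subspace `p` of `L ⊗_K E` therefore spans an invariant
subspace of `F ⊗_K E`, nonzero by injectivity and proper because it is killed by
`F ⊗_K E ≃ F ⊗_L (L ⊗_K E) → F ⊗_L ((L ⊗_K E) ⧸ p)`; embedding `L` into `K̄` gives (a) ⇒ (b).
Conversely, a nonzero vector of a proper invariant subspace `q` of `K̄ ⊗_K E` has its coefficients
in a finite extension `L`, and the preimage of `q` in `L ⊗_K E` is nonzero, proper and invariant.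
-/

open TensorProduct Module.FaithfullyFlat

def IsIrreducibleFamily {R V ι : Type*} [Semiring R] [AddCommMonoid V] [Module R V]
    (S : ι → Module.End R V) : Prop :=
  Nontrivial V ∧ ∀ p : Submodule R V, (∀ i, ∀ x ∈ p, S i x ∈ p) → p = ⊥ ∨ p = ⊤

section rTensorAlgebraMap

variable (K L F E : Type*) [Field K] [Field L] [Field F] [Algebra K L] [Algebra K F]
  [Algebra L F] [IsScalarTower K L F] [AddCommGroup E] [Module K E]

noncomputable def rTensorAlgebraMap : L ⊗[K] E →ₗ[L] F ⊗[K] E :=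
  AlgebraTensorModule.map (Algebra.linearMap L F) LinearMap.id

variable {K L F E}

@[simp]
lemma rTensorAlgebraMap_tmul (l : L) (e : E) :
    rTensorAlgebraMap K L F E (l ⊗ₜ e) = algebraMap L F l ⊗ₜ e :=
  rfl

lemma rTensorAlgebraMap_injective : Function.Injective (rTensorAlgebraMap K L F E) := by
  have h : (rTensorAlgebraMap K L F E).restrictScalars K =
      ((Algebra.linearMap L F).restrictScalars K).rTensor E := by
    ext; rfl
  have := Module.Flat.rTensor_preserves_injective_linearMap (M := E)
      ((Algebra.linearMap L F).restrictScalars K) (algebraMap L F).injective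
  rwa [← h] at this

lemma cancelBaseChange_one_tmul (x : L ⊗[K] E) :
    AlgebraTensorModule.cancelBaseChange K L F F E (1 ⊗ₜ x) = rTensorAlgebraMap K L F E x := by
  induction x using TensorProduct.induction_on with
  | zero => simp
  | tmul l e => simp [Algebra.smul_def]
  | add x y hx hy => rw [tmul_add, map_add, map_add, hx, hy]

lemma rTensorAlgebraMap_baseChange {E' : Type*} [AddCommGroup E'] [Module K E']
    (f : E →ₗ[K] E') (x : L ⊗[K] E) :
    rTensorAlgebraMap K L F E' (f.baseChange L x) = f.baseChange F (rTensorAlgebraMap K L F E x) := by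
  induction x using TensorProduct.induction_on with
  | zero => simp
  | tmul l e => rfl
  | add x y hx hy => simp only [map_add, hx, hy]

lemma span_range_rTensorAlgebraMap :
    Submodule.span F (Set.range (rTensorAlgebraMap K L F E)) = ⊤ := by
  refine Submodule.eq_top_iff'.2 fun x ↦ ?_
  induction x using TensorProduct.induction_on with
  | zero => exact zero_mem _
  | tmul a e =>
    have : a ⊗ₜ[K] e = a • rTensorAlgebraMap K L F E (1 ⊗ₜ e) := by simp [smul_tmul']
    exact this ▸ Submodule.smul_mem _ _ (Submodule.subset_span ⟨_, rfl⟩)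
  | add x y hx hy => exact add_mem hx hy

end rTensorAlgebraMap

section baseChange

variable {K L F E ι : Type*} [Field K] [Field L] [Field F] [Algebra K L] [Algebra K F]
  [Algebra L F] [IsScalarTower K L F] [AddCommGroup E] [Module K E]

lemma span_image_rTensorAlgebraMap_ne_bot {p : Submodule L (L ⊗[K] E)} (hp : p ≠ ⊥) :
    Submodule.span F (rTensorAlgebraMap K L F E '' p) ≠ ⊥ := by
  obtain ⟨y, hy, hy0⟩ := Submodule.exists_mem_ne_zero_of_ne_bot hp
  exact fun h ↦ hy0 <| (map_eq_zero_iff _ rTensorAlgebraMap_injective).1 <|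
    Submodule.span_eq_bot.1 h _ ⟨y, hy, rfl⟩

lemma span_image_rTensorAlgebraMap_ne_top {p : Submodule L (L ⊗[K] E)} (hp : p ≠ ⊤) :
    Submodule.span F (rTensorAlgebraMap K L F E '' p) ≠ ⊤ := by
  let Φ : F ⊗[K] E →ₗ[F] F ⊗[L] (L ⊗[K] E ⧸ p) :=
    p.mkQ.baseChange F ∘ₗ (AlgebraTensorModule.cancelBaseChange K L F F E).symm.toLinearMap
  have hΦ : Function.Surjective Φ :=
    (LinearMap.baseChange_surjective F p.mkQ_surjective).comp (LinearEquiv.surjective _)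
  have hker : Submodule.span F (rTensorAlgebraMap K L F E '' p) ≤ LinearMap.ker Φ := by
    rw [Submodule.span_le]
    rintro _ ⟨y, hy, rfl⟩
    simp [Φ, ← cancelBaseChange_one_tmul, (Submodule.Quotient.mk_eq_zero p).2 hy]
  have : Nontrivial (L ⊗[K] E ⧸ p) := Submodule.Quotient.nontrivial_iff.2 hp
  intro htop
  rw [htop, top_le_iff, LinearMap.ker_eq_top] at hker
  obtain ⟨z, hz⟩ := exists_ne (0 : F ⊗[L] (L ⊗[K] E ⧸ p))
  obtain ⟨x, rfl⟩ := hΦ z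
  exact hz (by rw [hker]; rfl)

lemma span_image_rTensorAlgebraMap_invariant (f : Module.End K E) {p : Submodule L (L ⊗[K] E)}
    (hp : ∀ x ∈ p, f.baseChange L x ∈ p) :
    ∀ x ∈ Submodule.span F (rTensorAlgebraMap K L F E '' p),
      f.baseChange F x ∈ Submodule.span F (rTensorAlgebraMap K L F E '' p) := by
  suffices h : Submodule.span F (rTensorAlgebraMap K L F E '' p) ≤
      (Submodule.span F (rTensorAlgebraMap K L F E '' p)).comap (f.baseChange F) from
    fun x hx ↦ h hx
  rw [Submodule.span_le]
  rintro _ ⟨z, hz, rfl⟩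
  rw [SetLike.mem_coe, Submodule.mem_comap, ← rTensorAlgebraMap_baseChange]
  exact Submodule.subset_span ⟨_, hp z hz, rfl⟩

lemma IsIrreducibleFamily.baseChange_of_tower (T : ι → Module.End K E)
    (h : IsIrreducibleFamily fun i ↦ (T i).baseChange F) :
    IsIrreducibleFamily fun i ↦ (T i).baseChange L := by
  refine ⟨?_, fun p hp ↦ ?_⟩
  · exact (nontrivial_tensorProduct_iff_right K L).2
      ((nontrivial_tensorProduct_iff_right K F).1 h.1)
  · by_contra! hne
    exact (h.2 _ fun i ↦ span_image_rTensorAlgebraMap_invariant (T i) (hp i)).elim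
      (span_image_rTensorAlgebraMap_ne_bot hne.1) (span_image_rTensorAlgebraMap_ne_top hne.2)

end baseChange

section algebraic

variable {K F E ι : Type*} [Field K] [Field F] [Algebra K F] [Algebra.IsAlgebraic K F]
  [AddCommGroup E] [Module K E]

lemma exists_finiteDimensional_mem_range_rTensorAlgebraMap (v : F ⊗[K] E) :
    ∃ M : IntermediateField K F, FiniteDimensional K M ∧
      v ∈ LinearMap.range (rTensorAlgebraMap K M F E) := by
  classical
  obtain ⟨S, rfl⟩ := TensorProduct.exists_finset v
  let M := IntermediateField.adjoin K ((S.image Prod.fst : Finset F) : Set F)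
  have hM (i : S) : i.1.1 ∈ M :=
    IntermediateField.subset_adjoin K _ (Finset.mem_image_of_mem Prod.fst i.2)
  refine ⟨M, IntermediateField.finiteDimensional_adjoin fun x _ ↦ Algebra.IsIntegral.isIntegral x,
    ∑ i ∈ S.attach, (⟨i.1.1, hM i⟩ : M) ⊗ₜ i.1.2, ?_⟩
  rw [map_sum, ← Finset.sum_attach S]
  rfl

lemma IsIrreducibleFamily.baseChange_of_forall_finiteDimensional (T : ι → Module.End K E)
    (h : ∀ M : IntermediateField K F, FiniteDimensional K M →
      IsIrreducibleFamily fun i ↦ (T i).baseChange M) :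
    IsIrreducibleFamily fun i ↦ (T i).baseChange F := by
  refine ⟨?_, fun q hq ↦ ?_⟩
  · exact (nontrivial_tensorProduct_iff_right K F).2
      ((nontrivial_tensorProduct_iff_right K (⊥ : IntermediateField K F)).1 (h ⊥ inferInstance).1)
  · by_contra! hne
    obtain ⟨v, hvq, hv0⟩ := Submodule.exists_mem_ne_zero_of_ne_bot hne.1
    obtain ⟨M, hM, w, rfl⟩ := exists_finiteDimensional_mem_range_rTensorAlgebraMap v
    let p : Submodule M (M ⊗[K] E) := (q.restrictScalars M).comap (rTensorAlgebraMap K M F E)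
    have hp (i : ι) : ∀ x ∈ p, (T i).baseChange M x ∈ p := fun x hx ↦
      show rTensorAlgebraMap K M F E _ ∈ q by rw [rTensorAlgebraMap_baseChange]; exact hq i _ hx
    have hp_bot : p ≠ ⊥ := fun hbot ↦ hv0 <| by
      rw [(Submodule.eq_bot_iff p).1 hbot w hvq, map_zero]
    have hp_top : p ≠ ⊤ := fun htop ↦ hne.2 <| by
      rw [eq_top_iff, ← span_range_rTensorAlgebraMap (L := M), Submodule.span_le]
      rintro _ ⟨x, rfl⟩
      have hx : x ∈ p := htop ▸ Submodule.mem_top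
      exact hx
    exact ((h M hM).2 p hp).elim hp_bot hp_top

end algebraic

theorem stmt_5_general {K : Type u} [Field K]
    {D : Type v} [Ring D] [Algebra K D]
    {E : Type v} [AddCommGroup E] [Module K E] [Module D E] [IsScalarTower K D E] :
    (Nontrivial (AlgebraicClosure K ⊗[K] E) ∧
      ∀ p : Submodule (AlgebraicClosure K) (AlgebraicClosure K ⊗[K] E),
        (∀ d : D, ∀ x ∈ p,
          LinearMap.baseChange (AlgebraicClosure K) (Algebra.lsmul K K E d) x ∈ p) →
        p = ⊥ ∨ p = ⊤)
    ↔ (∀ (L : Type u) [Field L] [Algebra K L], FiniteDimensional K L →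
        (Nontrivial (L ⊗[K] E) ∧
          ∀ p : Submodule L (L ⊗[K] E),
            (∀ d : D, ∀ x ∈ p,
              LinearMap.baseChange L (Algebra.lsmul K K E d) x ∈ p) →
            p = ⊥ ∨ p = ⊤)) := by
  let T (d : D) : Module.End K E := Algebra.lsmul K K E d
  refine ⟨fun h L _ _ _ ↦ ?_, fun h ↦ ?_⟩
  · let := (IsAlgClosed.lift : L →ₐ[K] AlgebraicClosure K).toAlgebra
    exact IsIrreducibleFamily.baseChange_of_tower (F := AlgebraicClosure K) T h
  · exact IsIrreducibleFamily.baseChange_of_forall_finiteDimensional T fun M ↦ h M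

/-- Let `K` be a field of characteristic `0`, `D` an associative unital
`K`-algebra and `E` a left `D`-module.  The following are equivalent:
(a) `K̄ ⊗_K E` is simple over `K̄ ⊗_K D`, where `K̄` is an algebraic closure of `K`
(simplicity of the base change is expressed as: the base change is nonzero, and the only
`K̄`-subspaces stable under the (base-changed) `D`-action are `⊥` and `⊤`);
(b) `L ⊗_K E` is simple over `L ⊗_K D` for every finite field extension `L` of `K`. -/
theorem stmt_5 {K : Type u} [Field K] [CharZero K]
    {D : Type v} [Ring D] [Algebra K D]
    {E : Type v} [AddCommGroup E] [Module K E] [Module D E] [IsScalarTower K D E] :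
    (Nontrivial (AlgebraicClosure K ⊗[K] E) ∧
      ∀ p : Submodule (AlgebraicClosure K) (AlgebraicClosure K ⊗[K] E),
        (∀ d : D, ∀ x ∈ p,
          LinearMap.baseChange (AlgebraicClosure K) (Algebra.lsmul K K E d) x ∈ p) →
        p = ⊥ ∨ p = ⊤)
    ↔ (∀ (L : Type u) [Field L] [Algebra K L], FiniteDimensional K L →
        (Nontrivial (L ⊗[K] E) ∧
          ∀ p : Submodule L (L ⊗[K] E),
            (∀ d : D, ∀ x ∈ p,
              LinearMap.baseChange L (Algebra.lsmul K K E d) x ∈ p) →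
            p = ⊥ ∨ p = ⊤)) :=
  stmt_5_general
end

section
/- Let (O, ∂) be a differential K-algebra and (E, ∂_E) a differential module over O that is finite free as an O-module. Let R ∈ Art_K, set O_R := R ⊗_K O with the derivation 1 ⊗ ∂, and give E_R := R ⊗_K E the connection 1 ⊗ ∂_E. (i) Every deformation (F, ∂_F, θ) of E over R is isomorphic, compatibly with the maps to E, to (E_R, (1 ⊗ ∂_E) + μ, canonical projection) for some O_R-linear endomorphism μ of E_R whose reduction modulo m_R is 0. (ii) For two such endomorphisms μ and μ′, the deformations (E_R, (1 ⊗ ∂_E) + μ) and (E_R, (1 ⊗ ∂_E) + μ′) are isomorphic compatibly with the canonical projections to E if and only if there exists an O_R-linear automorphism u of E_R whose reduction modulo m_R is the identity of E and such that u ∘ ((1 ⊗ ∂_E) + μ′) ∘ u⁻¹ = (1 ⊗ ∂_E) + μ. -/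
open scoped TensorProduct

universe u v w w'

/-- The canonical projection `R ⊗_K E → E ≅ K ⊗_R (R ⊗_K E)` induced by the residue map
`ε : R → K`. -/
noncomputable def stmt10Proj {K : Type u} [Field K] {R : Type v} [CommRing R] [Algebra K R]
    {E : Type w} [AddCommGroup E] [Module K E] (ε : R →ₐ[K] K) :
    R ⊗[K] E →ₗ[K] E :=
  (TensorProduct.lid K E).toLinearMap.comp (LinearMap.rTensor E ε.toLinearMap)

/-- The action of `a : O` on `E_R = R ⊗_K E` through the right factor (`1 ⊗ a`-multiplication,
encoding the `O_R = R ⊗_K O`-module structure of `E_R`). -/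
noncomputable def stmt10Act {K : Type u} [Field K] (R : Type v) [CommRing R] [Algebra K R]
    {O : Type*} [CommRing O] [Algebra K O]
    {E : Type w} [AddCommGroup E] [Module K E] [Module O E] [IsScalarTower K O E] (a : O) :
    R ⊗[K] E →ₗ[K] R ⊗[K] E :=
  LinearMap.lTensor R (Algebra.lsmul K K E a)

/-- The reduction `O_R = R ⊗_K O → O` induced by the residue map `ε : R → K`. -/
noncomputable def stmt10Red {K : Type u} [Field K] {R : Type v} [CommRing R] [Algebra K R]
    {O : Type*} [CommRing O] [Algebra K O] (ε : R →ₐ[K] K) :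
    R ⊗[K] O →ₐ[K] O :=
  Algebra.TensorProduct.productMap ((Algebra.ofId K O).comp ε) (AlgHom.id K O)

/-!
Lift an `O`-basis of `E` along `θ` and extend `R`-linearly: this gives an `O_R`-linear map
`φ : E_R → F` with `θ ∘ φ` the canonical projection. As `m_R` is nilpotent, Nakayama's lemma holds
without finiteness assumptions, so `φ` is surjective; tensoring `0 → ker φ → E_R → F → 0` with `m_R`
and using flatness of `F` gives `ker φ = m_R • ker φ`, so `φ` is injective as well. Transported
along `φ`, the connection `∂_F` differs from `1 ⊗ ∂_E` by an `O_R`-linear map `μ`, since both are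
connections over the same derivation, and `μ` vanishes modulo `m_R` because `θ` is horizontal.
Part (ii) is a reformulation: an isomorphism of deformations is a gauge transformation.
-/

section Nakayama

variable {R M N : Type*} [CommRing R] [AddCommGroup M] [Module R M] [AddCommGroup N] [Module R N]

theorem Submodule.le_of_le_sup_smul_of_isNilpotent {I : Ideal R} (hI : IsNilpotent I)
    {P P' : Submodule R M} (h : P' ≤ P ⊔ I • P') : P' ≤ P := by
  have hpow : ∀ k : ℕ, P' ≤ P ⊔ I ^ k • P' := by
    intro k
    induction k with
    | zero => simp
    | succ k ih =>
      calc P' ≤ P ⊔ I ^ k • (P ⊔ I • P') := ih.trans (sup_le_sup_left (smul_mono_right _ h) _)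
        _ = P ⊔ I ^ k • P ⊔ I ^ (k + 1) • P' := by
          rw [Submodule.smul_sup, ← sup_assoc, pow_succ, Submodule.mul_smul]
        _ ≤ P ⊔ I ^ (k + 1) • P' := sup_le_sup_right (sup_le le_rfl Submodule.smul_le_right) _
  obtain ⟨n, hn⟩ := hI
  simpa [hn] using hpow n

theorem Ideal.lid_rTensor_subtype_lTensor (I : Ideal R) (g : M →ₗ[R] N) (x : I ⊗[R] M) :
    TensorProduct.lid R N (I.subtype.rTensor N (g.lTensor I x)) =
      g (TensorProduct.lid R M (I.subtype.rTensor M x)) := by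
  induction x using TensorProduct.induction_on with
  | zero => simp
  | tmul i m => simp
  | add x y hx hy => simp only [map_add, hx, hy]

theorem LinearMap.ker_inf_smul_top_le_smul_ker [Module.Flat R N] (I : Ideal R) {f : M →ₗ[R] N}
    (hf : Function.Surjective f) : LinearMap.ker f ⊓ I • ⊤ ≤ I • LinearMap.ker f := by
  rintro x ⟨hx, hxI⟩
  rw [← Ideal.subtype_rTensor_range] at hxI
  obtain ⟨ξ, rfl⟩ := hxI
  have hξ : f.lTensor I ξ = 0 := by
    apply (TensorProduct.lid R N).injective.comp (Module.Flat.iff_rTensor_injective'.mp ‹_› I)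
    simpa [Ideal.lid_rTensor_subtype_lTensor] using hx
  obtain ⟨η, rfl⟩ := (lTensor_exact I (LinearMap.exact_subtype_ker_map f) hf ξ).mp hξ
  have hrange := Submodule.map_smul'' I ⊤ (LinearMap.ker f).subtype
  rw [Submodule.map_subtype_top, ← Ideal.subtype_rTensor_range] at hrange
  rw [← hrange]
  exact ⟨_, ⟨η, rfl⟩, (Ideal.lid_rTensor_subtype_lTensor I _ η).symm⟩

theorem LinearMap.bijective_of_isNilpotent_of_flat [Module.Flat R N] {I : Ideal R}
    (hI : IsNilpotent I) (f : M →ₗ[R] N) (hrange : ⊤ ≤ LinearMap.range f ⊔ I • ⊤)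
    (hker : LinearMap.ker f ≤ I • ⊤) : Function.Bijective f := by
  have hsurj : Function.Surjective f :=
    LinearMap.range_eq_top.mp (top_le_iff.mp (Submodule.le_of_le_sup_smul_of_isNilpotent hI hrange))
  refine ⟨LinearMap.ker_eq_bot.mp (le_bot_iff.mp ?_), hsurj⟩
  refine Submodule.le_of_le_sup_smul_of_isNilpotent hI ?_
  rw [bot_sup_eq]
  exact le_inf le_rfl hker |>.trans (LinearMap.ker_inf_smul_top_le_smul_ker I hsurj)

end Nakayama

theorem Module.Free.exists_semilinear_section {K O A E F : Type*} [CommRing K] [CommRing O]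
    [Algebra K O] [CommRing A] [Algebra K A] [AddCommGroup E] [Module O E] [Module K E]
    [IsScalarTower K O E] [Module.Free O E] [AddCommGroup F] [Module A F] [Module K F]
    [IsScalarTower K A F] (ι : O →ₐ[K] A) {θ : F →+ E}
    (hθ : ∀ (a : O) (x : F), θ (ι a • x) = a • θ x) (hsurj : Function.Surjective θ) :
    ∃ ψ : E →ₗ[K] F, (∀ e, θ (ψ e) = e) ∧ ∀ (a : O) (e : E), ψ (a • e) = ι a • ψ e := by
  let b := Module.Free.chooseBasis O E
  choose f hf using fun i ↦ hsurj (b i)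
  refine ⟨(Finsupp.linearCombination A f).restrictScalars K ∘ₗ
    Finsupp.mapRange.linearMap ι.toLinearMap ∘ₗ b.repr.toLinearMap.restrictScalars K, ?_, ?_⟩
  · intro e
    conv_rhs => rw [← b.linearCombination_repr e]
    simp [Finsupp.linearCombination_apply, Finsupp.sum_mapRange_index, map_finsuppSum, hθ, hf]
  · intro a e
    have hmapRange : ∀ g : Module.Free.ChooseBasisIndex O E →₀ O,
        Finsupp.mapRange ι (map_zero ι) (a • g) = ι a • Finsupp.mapRange ι (map_zero ι) g :=
      fun g ↦ by ext; simp
    simp [hmapRange]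

section BaseChange

variable {K : Type u} [Field K] {R : Type*} [CommRing R] [Algebra K R]
  {E : Type w} [AddCommGroup E] [Module K E] (ε : R →ₐ[K] K)

@[simp]
theorem stmt10Proj_tmul (r : R) (e : E) : stmt10Proj ε (r ⊗ₜ[K] e) = ε r • e := by
  simp [stmt10Proj]

theorem stmt10Proj_smul (r : R) (x : R ⊗[K] E) :
    stmt10Proj ε (r • x) = ε r • stmt10Proj ε x := by
  induction x using TensorProduct.induction_on with
  | zero => simp
  | tmul s e => simp [TensorProduct.smul_tmul', mul_smul]
  | add x y hx hy => simp only [smul_add, map_add, hx, hy]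

theorem stmt10Proj_lTensor {E' : Type*} [AddCommGroup E'] [Module K E'] (g : E →ₗ[K] E')
    (x : R ⊗[K] E) : stmt10Proj ε (g.lTensor R x) = g (stmt10Proj ε x) := by
  induction x using TensorProduct.induction_on with
  | zero => simp
  | tmul s e => simp
  | add x y hx hy => simp only [map_add, hx, hy]

theorem sub_one_tmul_stmt10Proj_mem (x : R ⊗[K] E) :
    x - 1 ⊗ₜ stmt10Proj ε x ∈ RingHom.ker ε • (⊤ : Submodule R (R ⊗[K] E)) := by
  induction x using TensorProduct.induction_on with
  | zero => simp
  | tmul r e =>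
    have hr : r - algebraMap K R (ε r) ∈ RingHom.ker ε := by simp
    convert Submodule.smul_mem_smul hr (Submodule.mem_top (x := (1 : R) ⊗ₜ[K] e)) using 1
    rw [TensorProduct.smul_tmul', smul_eq_mul, mul_one, TensorProduct.sub_tmul,
      stmt10Proj_tmul, TensorProduct.tmul_smul, TensorProduct.smul_tmul',
      Algebra.algebraMap_eq_smul_one]
  | add x y hx hy =>
    rw [map_add, TensorProduct.tmul_add, add_sub_add_comm]
    exact Submodule.add_mem _ hx hy

theorem mem_ker_smul_top_of_stmt10Proj_eq_zero {x : R ⊗[K] E} (hx : stmt10Proj ε x = 0) :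
    x ∈ RingHom.ker ε • (⊤ : Submodule R (R ⊗[K] E)) := by
  simpa [hx] using sub_one_tmul_stmt10Proj_mem ε x

theorem stmt10Proj_apply_eq_of_tmul_one {u : R ⊗[K] E →ₗ[R] R ⊗[K] E}
    (hu : ∀ e : E, stmt10Proj ε (u (1 ⊗ₜ e)) = e) (x : R ⊗[K] E) :
    stmt10Proj ε (u x) = stmt10Proj ε x := by
  induction x using TensorProduct.induction_on with
  | zero => simp
  | tmul r e =>
    rw [← mul_one r, ← smul_eq_mul, ← TensorProduct.smul_tmul', map_smul, stmt10Proj_smul,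
      stmt10Proj_smul, hu, stmt10Proj_tmul, map_one, one_smul]
  | add x y hx hy => simp only [map_add, hx, hy]

variable {O : Type*} [CommRing O] [Algebra K O]

@[simp]
theorem stmt10Red_tmul (r : R) (a : O) : stmt10Red ε (r ⊗ₜ[K] a) = ε r • a := by
  simp [stmt10Red, Algebra.smul_def]

variable [Module O E] [IsScalarTower K O E]

@[simp]
theorem stmt10Act_tmul (a : O) (r : R) (e : E) :
    stmt10Act R a (r ⊗ₜ[K] e) = r ⊗ₜ[K] (a • e) := by
  simp [stmt10Act]

theorem lTensor_stmt10Act {δ : Derivation K O O} {dE : E →ₗ[K] E}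
    (hdE : ∀ (a : O) (e : E), dE (a • e) = δ a • e + a • dE e) (a : O) (x : R ⊗[K] E) :
    dE.lTensor R (stmt10Act R a x) = stmt10Act R (δ a) x + stmt10Act R a (dE.lTensor R x) := by
  induction x using TensorProduct.induction_on with
  | zero => simp
  | tmul r e => simp [hdE, TensorProduct.tmul_add]
  | add x y hx hy => simp only [map_add, hx, hy]; abel

end BaseChange

section Deformation

variable {K : Type u} [Field K] {O : Type v} [CommRing O] [Algebra K O]
  {E : Type w} [AddCommGroup E] [Module K E] [Module O E] [IsScalarTower K O E]
  {R : Type*} [CommRing R] [Algebra K R] {ε : R →ₐ[K] K}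
  {F : Type w'} [AddCommGroup F] [Module R F] [Module (R ⊗[K] O) F]
  [IsScalarTower R (R ⊗[K] O) F]

theorem map_smul_of_map_smul_stmt10Red {θ : F →+ E}
    (hθ : ∀ (c : R ⊗[K] O) (x : F), θ (c • x) = stmt10Red ε c • θ x) (r : R) (x : F) :
    θ (r • x) = ε r • θ x := by
  rw [← algebraMap_smul (R ⊗[K] O) r x, hθ, Algebra.TensorProduct.algebraMap_apply,
    Algebra.algebraMap_self_apply, stmt10Red_tmul, smul_one_smul]

theorem bijective_of_map_eq_stmt10Proj [Module.Flat R F] (hnil : IsNilpotent (RingHom.ker ε))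
    {θ : F →+ E} (hker : ∀ x : F, θ x = 0 ↔ x ∈ RingHom.ker ε • (⊤ : Submodule R F))
    {φ : R ⊗[K] E →ₗ[R] F} (hφ : ∀ x, θ (φ x) = stmt10Proj ε x) : Function.Bijective φ := by
  refine φ.bijective_of_isNilpotent_of_flat hnil (fun y _ ↦ ?_) (fun x hx ↦ ?_)
  · have hy : y - φ (1 ⊗ₜ θ y) ∈ RingHom.ker ε • (⊤ : Submodule R F) := by
      rw [← hker, map_sub, hφ, stmt10Proj_tmul, map_one, one_smul, sub_self]
    simpa using Submodule.add_mem_sup (LinearMap.mem_range_self φ (1 ⊗ₜ θ y)) hy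
  · refine mem_ker_smul_top_of_stmt10Proj_eq_zero ε ?_
    rw [← hφ, LinearMap.mem_ker.mp hx, map_zero]

theorem map_smul_of_connection {δ : Derivation K O O} {dF : F →+ F}
    (hdF : ∀ (c : R ⊗[K] O) (x : F), dF (c • x) = δ.toLinearMap.lTensor R c • x + c • dF x)
    (r : R) (x : F) : dF (r • x) = r • dF x := by
  rw [← algebraMap_smul (R ⊗[K] O) r x, hdF, algebraMap_smul,
    Algebra.TensorProduct.algebraMap_apply]
  simp

theorem liftBaseChange_stmt10Act [Module K F] [IsScalarTower K R F] {ψ : E →ₗ[K] F}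
    (hψ : ∀ (a : O) (e : E), ψ (a • e) = (1 ⊗ₜ[K] a : R ⊗[K] O) • ψ e) (a : O) (x : R ⊗[K] E) :
    ψ.liftBaseChange R (stmt10Act R a x) = (1 ⊗ₜ[K] a : R ⊗[K] O) • ψ.liftBaseChange R x := by
  induction x using TensorProduct.induction_on with
  | zero => simp
  | tmul r e => simp [hψ, smul_comm r]
  | add x y hx hy => simp only [map_add, hx, hy, smul_add]

theorem map_liftBaseChange [Module K F] [IsScalarTower K R F] {θ : F →+ E}
    (hθ : ∀ (r : R) (x : F), θ (r • x) = ε r • θ x) {ψ : E →ₗ[K] F} (hψ : ∀ e, θ (ψ e) = e)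
    (x : R ⊗[K] E) :
    θ (ψ.liftBaseChange R x) = stmt10Proj ε x := by
  induction x using TensorProduct.induction_on with
  | zero => simp
  | tmul r e => simp [hθ, hψ]
  | add x y hx hy => simp only [map_add, hx, hy]

theorem exists_stmt10_trivialization {δ : Derivation K O O} {dE : E →ₗ[K] E}
    (hdE : ∀ (a : O) (e : E), dE (a • e) = δ a • e + a • dE e) {dF : F →+ F}
    (hdF : ∀ (c : R ⊗[K] O) (x : F), dF (c • x) = δ.toLinearMap.lTensor R c • x + c • dF x)
    {θ : F →+ E} (hθd : ∀ x : F, θ (dF x) = dE (θ x)) (Φ : R ⊗[K] E ≃ₗ[R] F)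
    (hΦ : ∀ (a : O) (x : R ⊗[K] E), Φ (stmt10Act R a x) = (1 ⊗ₜ[K] a : R ⊗[K] O) • Φ x)
    (hθΦ : ∀ x, θ (Φ x) = stmt10Proj ε x) :
    ∃ μ : (R ⊗[K] E) →ₗ[R] (R ⊗[K] E),
      (∀ (a : O) (x : R ⊗[K] E), μ (stmt10Act R a x) = stmt10Act R a (μ x)) ∧
      (∀ x : R ⊗[K] E, stmt10Proj ε (μ x) = 0) ∧
      ∃ u : F ≃ₗ[R] (R ⊗[K] E),
        (∀ (a : O) (x : F), u ((1 ⊗ₜ[K] a : R ⊗[K] O) • x) = stmt10Act R a (u x)) ∧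
        (∀ x : F, u (dF x) = LinearMap.lTensor R dE (u x) + μ (u x)) ∧
        (∀ x : F, θ x = stmt10Proj ε (u x)) := by
  let dFR : F →ₗ[R] F :=
    { toFun := dF, map_add' := dF.map_add, map_smul' := map_smul_of_connection hdF }
  let μ := Φ.symm.toLinearMap ∘ₗ dFR ∘ₗ Φ.toLinearMap - dE.baseChange R
  have hμ : ∀ x, μ x = Φ.symm (dF (Φ x)) - dE.lTensor R x := fun x ↦ by
    simp [μ, dFR, LinearMap.baseChange_eq_ltensor]
  have hΦsymm : ∀ (a : O) (y : F),
      Φ.symm ((1 ⊗ₜ[K] a : R ⊗[K] O) • y) = stmt10Act R a (Φ.symm y) := fun a y ↦ by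
    rw [Φ.symm_apply_eq, hΦ, Φ.apply_symm_apply]
  refine ⟨μ, fun a x ↦ ?_, fun x ↦ ?_, Φ.symm, hΦsymm, fun y ↦ ?_, fun y ↦ ?_⟩
  · rw [hμ, hμ, hΦ, hdF, LinearMap.lTensor_tmul, map_add, hΦsymm, hΦsymm,
      lTensor_stmt10Act hdE, map_sub, Derivation.coeFn_coe, Φ.symm_apply_apply]
    abel
  · rw [hμ, map_sub, ← hθΦ, Φ.apply_symm_apply, hθd, hθΦ, stmt10Proj_lTensor, sub_self]
  · rw [hμ, Φ.apply_symm_apply]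
    abel
  · rw [← hθΦ, Φ.apply_symm_apply]

end Deformation

theorem exists_stmt10_iso_iff_exists_conj {K : Type u} [Field K] {R : Type*} [CommRing R]
    [Algebra K R] {O : Type*} [CommRing O] [Algebra K O] {E : Type w} [AddCommGroup E]
    [Module K E] [Module O E] [IsScalarTower K O E] (ε : R →ₐ[K] K) (dE : E →ₗ[K] E)
    (μ μ' : (R ⊗[K] E) →ₗ[R] (R ⊗[K] E)) :
    (∃ v : (R ⊗[K] E) ≃ₗ[R] (R ⊗[K] E),
        (∀ (a : O) (x : R ⊗[K] E), v (stmt10Act R a x) = stmt10Act R a (v x)) ∧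
        (∀ x : R ⊗[K] E,
          v (LinearMap.lTensor R dE x + μ' x) = LinearMap.lTensor R dE (v x) + μ (v x)) ∧
        (∀ x : R ⊗[K] E, stmt10Proj ε (v x) = stmt10Proj ε x))
      ↔ (∃ u : (R ⊗[K] E) ≃ₗ[R] (R ⊗[K] E),
        (∀ (a : O) (x : R ⊗[K] E), u (stmt10Act R a x) = stmt10Act R a (u x)) ∧
        (∀ e : E, stmt10Proj ε (u ((1 : R) ⊗ₜ[K] e)) = e) ∧
        (∀ x : R ⊗[K] E,
          u (LinearMap.lTensor R dE (u.symm x) + μ' (u.symm x)) =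
            LinearMap.lTensor R dE x + μ x)) := by
  constructor
  · rintro ⟨v, hvO, hvd, hvε⟩
    refine ⟨v, hvO, fun e ↦ by simp [hvε], fun x ↦ by simpa using hvd (v.symm x)⟩
  · rintro ⟨u, huO, huε, hud⟩
    refine ⟨u, huO, fun x ↦ by simpa using hud (u x), stmt10Proj_apply_eq_of_tmul_one ε huε⟩

theorem stmt_10_general {K : Type u} [Field K]
    {O : Type v} [CommRing O] [Algebra K O] (δ : Derivation K O O)
    {E : Type w} [AddCommGroup E] [Module K E] [Module O E] [IsScalarTower K O E]
    [Module.Free O E]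
    (dE : E →ₗ[K] E) (hdE : ∀ (a : O) (e : E), dE (a • e) = δ a • e + a • dE e)
    {R : Type u} [CommRing R] [Algebra K R] [IsArtinianRing R] [IsLocalRing R]
    (ε : R →ₐ[K] K) (hε : RingHom.ker ε = IsLocalRing.maximalIdeal R) :
    -- (i)
    (∀ (F : Type w') [AddCommGroup F] [Module K F] [Module R F] [IsScalarTower K R F]
        [Module (R ⊗[K] O) F] [IsScalarTower R (R ⊗[K] O) F],
      Module.Flat R F →
      ∀ (dF : F →+ F) (θ : F →+ E),
        (∀ (c : R ⊗[K] O) (x : F),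
          dF (c • x) = (LinearMap.lTensor R δ.toLinearMap) c • x + c • dF x) →
        (∀ (c : R ⊗[K] O) (x : F), θ (c • x) = stmt10Red ε c • θ x) →
        (∀ x : F, θ (dF x) = dE (θ x)) →
        Function.Surjective θ →
        (∀ x : F, θ x = 0 ↔ x ∈ IsLocalRing.maximalIdeal R • (⊤ : Submodule R F)) →
        ∃ μ : (R ⊗[K] E) →ₗ[R] (R ⊗[K] E),
          (∀ (a : O) (x : R ⊗[K] E), μ (stmt10Act R a x) = stmt10Act R a (μ x)) ∧
          (∀ x : R ⊗[K] E, stmt10Proj ε (μ x) = 0) ∧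
          ∃ u : F ≃ₗ[R] (R ⊗[K] E),
            (∀ (a : O) (x : F), u ((1 ⊗ₜ[K] a : R ⊗[K] O) • x) = stmt10Act R a (u x)) ∧
            (∀ x : F, u (dF x) = LinearMap.lTensor R dE (u x) + μ (u x)) ∧
            (∀ x : F, θ x = stmt10Proj ε (u x)))
    ∧
    -- (ii)
    (∀ μ μ' : (R ⊗[K] E) →ₗ[R] (R ⊗[K] E),
      (∀ (a : O) (x : R ⊗[K] E), μ (stmt10Act R a x) = stmt10Act R a (μ x)) →
      (∀ (a : O) (x : R ⊗[K] E), μ' (stmt10Act R a x) = stmt10Act R a (μ' x)) →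
      (∀ x : R ⊗[K] E, stmt10Proj ε (μ x) = 0) →
      (∀ x : R ⊗[K] E, stmt10Proj ε (μ' x) = 0) →
      ((∃ v : (R ⊗[K] E) ≃ₗ[R] (R ⊗[K] E),
          (∀ (a : O) (x : R ⊗[K] E), v (stmt10Act R a x) = stmt10Act R a (v x)) ∧
          (∀ x : R ⊗[K] E,
            v (LinearMap.lTensor R dE x + μ' x) = LinearMap.lTensor R dE (v x) + μ (v x)) ∧
          (∀ x : R ⊗[K] E, stmt10Proj ε (v x) = stmt10Proj ε x))
        ↔ (∃ u : (R ⊗[K] E) ≃ₗ[R] (R ⊗[K] E),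
          (∀ (a : O) (x : R ⊗[K] E), u (stmt10Act R a x) = stmt10Act R a (u x)) ∧
          (∀ e : E, stmt10Proj ε (u ((1 : R) ⊗ₜ[K] e)) = e) ∧
          (∀ x : R ⊗[K] E,
            u (LinearMap.lTensor R dE (u.symm x) + μ' (u.symm x)) =
              LinearMap.lTensor R dE x + μ x)))) := by
  refine ⟨fun F _ _ _ _ _ _ _ dF θ hdF hθ hθd hsurj hker ↦ ?_,
    fun μ μ' _ _ _ _ ↦ exists_stmt10_iso_iff_exists_conj ε dE μ μ'⟩
  have hm : IsNilpotent (RingHom.ker ε) := by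
    rw [hε, ← IsLocalRing.jacobson_eq_maximalIdeal ⊥ bot_ne_top]
    exact IsArtinianRing.isNilpotent_jacobson_bot
  have := IsScalarTower.to₁₃₄ K R (R ⊗[K] O) F
  obtain ⟨ψ, hθψ, hψ⟩ := Module.Free.exists_semilinear_section
    (Algebra.TensorProduct.includeRight : O →ₐ[K] R ⊗[K] O) (fun a x ↦ by simp [hθ]) hsurj
  have hθφ := map_liftBaseChange (map_smul_of_map_smul_stmt10Red hθ) hθψ
  let Φ := LinearEquiv.ofBijective (ψ.liftBaseChange R)
    (bijective_of_map_eq_stmt10Proj hm (hε ▸ hker) hθφ)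
  exact exists_stmt10_trivialization hdE hdF hθd Φ (liftBaseChange_stmt10Act hψ) hθφ

/-- Let `(O, δ)` be a differential `K`-algebra and `(E, dE)` a differential
module over `O`, finite free as an `O`-module.  Let `R` be an Artinian local `K`-algebra with
residue field `K` (witnessed by `ε : R →ₐ[K] K` with kernel the maximal ideal).  Put
`O_R := R ⊗_K O` with derivation `1 ⊗ δ` and `E_R := R ⊗_K E` with connection `1 ⊗ dE`.

(i) Every deformation `(F, dF, θ)` of `E` over `R` (`F` an `O_R`-module flat over `R`, `dF` a
connection relative to `1 ⊗ δ`, `θ : F → E` an `O_R`-semilinear horizontal map which is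
surjective with kernel `m_R • F`) is isomorphic, compatibly with the maps to `E`, to
`(E_R, (1 ⊗ dE) + μ, canonical projection)` for some `O_R`-linear endomorphism `μ` of `E_R`
whose reduction modulo `m_R` is `0`.

(ii) For two such `μ, μ'`, the deformations `(E_R, (1 ⊗ dE) + μ)` and `(E_R, (1 ⊗ dE) + μ')`
are isomorphic compatibly with the canonical projections to `E` if and only if there exists an
`O_R`-linear automorphism `u` of `E_R` whose reduction modulo `m_R` is the identity of `E`
such that `u ∘ ((1 ⊗ dE) + μ') ∘ u⁻¹ = (1 ⊗ dE) + μ`. -/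
theorem stmt_10 {K : Type u} [Field K] [CharZero K]
    {O : Type v} [CommRing O] [Algebra K O] (δ : Derivation K O O)
    {E : Type w} [AddCommGroup E] [Module K E] [Module O E] [IsScalarTower K O E]
    [Module.Free O E] [Module.Finite O E]
    (dE : E →ₗ[K] E) (hdE : ∀ (a : O) (e : E), dE (a • e) = δ a • e + a • dE e)
    {R : Type u} [CommRing R] [Algebra K R] [IsArtinianRing R] [IsLocalRing R]
    (ε : R →ₐ[K] K) (hε : RingHom.ker ε = IsLocalRing.maximalIdeal R) :
    -- (i)
    (∀ (F : Type w') [AddCommGroup F] [Module K F] [Module R F] [IsScalarTower K R F]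
        [Module (R ⊗[K] O) F] [IsScalarTower R (R ⊗[K] O) F],
      Module.Flat R F →
      ∀ (dF : F →+ F) (θ : F →+ E),
        (∀ (c : R ⊗[K] O) (x : F),
          dF (c • x) = (LinearMap.lTensor R δ.toLinearMap) c • x + c • dF x) →
        (∀ (c : R ⊗[K] O) (x : F), θ (c • x) = stmt10Red ε c • θ x) →
        (∀ x : F, θ (dF x) = dE (θ x)) →
        Function.Surjective θ →
        (∀ x : F, θ x = 0 ↔ x ∈ IsLocalRing.maximalIdeal R • (⊤ : Submodule R F)) →
        ∃ μ : (R ⊗[K] E) →ₗ[R] (R ⊗[K] E),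
          (∀ (a : O) (x : R ⊗[K] E), μ (stmt10Act R a x) = stmt10Act R a (μ x)) ∧
          (∀ x : R ⊗[K] E, stmt10Proj ε (μ x) = 0) ∧
          ∃ u : F ≃ₗ[R] (R ⊗[K] E),
            (∀ (a : O) (x : F), u ((1 ⊗ₜ[K] a : R ⊗[K] O) • x) = stmt10Act R a (u x)) ∧
            (∀ x : F, u (dF x) = LinearMap.lTensor R dE (u x) + μ (u x)) ∧
            (∀ x : F, θ x = stmt10Proj ε (u x)))
    ∧
    -- (ii)
    (∀ μ μ' : (R ⊗[K] E) →ₗ[R] (R ⊗[K] E),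
      (∀ (a : O) (x : R ⊗[K] E), μ (stmt10Act R a x) = stmt10Act R a (μ x)) →
      (∀ (a : O) (x : R ⊗[K] E), μ' (stmt10Act R a x) = stmt10Act R a (μ' x)) →
      (∀ x : R ⊗[K] E, stmt10Proj ε (μ x) = 0) →
      (∀ x : R ⊗[K] E, stmt10Proj ε (μ' x) = 0) →
      ((∃ v : (R ⊗[K] E) ≃ₗ[R] (R ⊗[K] E),
          (∀ (a : O) (x : R ⊗[K] E), v (stmt10Act R a x) = stmt10Act R a (v x)) ∧
          (∀ x : R ⊗[K] E,
            v (LinearMap.lTensor R dE x + μ' x) = LinearMap.lTensor R dE (v x) + μ (v x)) ∧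
          (∀ x : R ⊗[K] E, stmt10Proj ε (v x) = stmt10Proj ε x))
        ↔ (∃ u : (R ⊗[K] E) ≃ₗ[R] (R ⊗[K] E),
          (∀ (a : O) (x : R ⊗[K] E), u (stmt10Act R a x) = stmt10Act R a (u x)) ∧
          (∀ e : E, stmt10Proj ε (u ((1 : R) ⊗ₜ[K] e)) = e) ∧
          (∀ x : R ⊗[K] E,
            u (LinearMap.lTensor R dE (u.symm x) + μ' (u.symm x)) =
              LinearMap.lTensor R dE x + μ x)))) :=
  stmt_10_general δ dE hdE ε hε
end

section
/- Let K be a field of characteristic 0 equipped with a nonarchimedean norm making it a normed field (‖x + y‖ ≤ max(‖x‖, ‖y‖)) such that ‖(n : K)‖ ≥ 1/n for every positive integer n. Let V be the set of sequences a : ℕ → K for which there exist a real constant c > 0 and η with 0 < η < 1 satisfying ‖a(n)‖ ≤ c·ηⁿ for all n. Define T on sequences by (Ta)(0) = 0 and (Ta)(n+1) = (n+1)·a(n). Then T maps V into V, T is injective on V, and every b ∈ V can be written uniquely as b = T(a) + λ·δ₀ with a ∈ V and λ ∈ K, where δ₀ is the sequence with δ₀(0) = 1 and δ₀(n) = 0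 for n ≥ 1. (This computes that the de Rham complex of the delta module δ_z has vanishing H⁰ and one-dimensional H¹.) -/
/-- The operator `T` on sequences: `(T a) 0 = 0` and `(T a) (n+1) = (n+1) • a n`. -/
def stmt11T {K : Type*} [Field K] (a : ℕ → K) : ℕ → K
  | 0 => 0
  | (m + 1) => ((m + 1 : ℕ) : K) * a m

/-- The sequence `δ₀` with `δ₀ 0 = 1` and `δ₀ n = 0` for `n ≥ 1`. -/
def stmt11delta {K : Type*} [Field K] : ℕ → K :=
  fun n => if n = 0 then 1 else 0

/-!
In a nonarchimedean field `‖(n : K)‖ ≤ 1`, so `T` does not increase norms (up to a shift of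
index) and preserves geometric decay. Conversely, the left inverse `b ↦ (b (n+1) / (n+1))ₙ` of
`T` multiplies norms by at most `n + 1`, and a linear factor is absorbed into geometric decay by
enlarging the ratio `η` to `(1 + η) / 2`. As `T` hits exactly the sequences vanishing at `0`,
`b = T (b (· + 1) / (· + 1)) + b 0 • δ₀` is the unique decomposition.
-/

def IsGeomBounded {E : Type*} [Norm E] (a : ℕ → E) : Prop :=
  ∃ c : ℝ, 0 < c ∧ ∃ η : ℝ, 0 < η ∧ η < 1 ∧ ∀ n : ℕ, ‖a n‖ ≤ c * η ^ n

lemma add_one_mul_pow_le_one_div_one_sub {s : ℝ} (hs0 : 0 ≤ s) (hs1 : s < 1) (n : ℕ) :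
    ((n : ℝ) + 1) * s ^ n ≤ 1 / (1 - s) := by
  calc ((n : ℝ) + 1) * s ^ n = ∑ _i ∈ Finset.range (n + 1), s ^ n := by simp
    _ ≤ ∑ i ∈ Finset.range (n + 1), s ^ i :=
        Finset.sum_le_sum fun i hi =>
          pow_le_pow_of_le_one hs0 hs1.le (Nat.lt_succ_iff.mp (Finset.mem_range.mp hi))
    _ ≤ s ^ 0 / (1 - s) := by
        rw [Finset.range_eq_Ico]; exact geom_sum_Ico_le_of_lt_one hs0 hs1
    _ = 1 / (1 - s) := by rw [pow_zero]

namespace IsGeomBounded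

variable {E F : Type*} [Norm E] [Norm F]

lemma mono {a : ℕ → E} {b : ℕ → F} (hb : IsGeomBounded b) (h : ∀ n, ‖a n‖ ≤ ‖b n‖) :
    IsGeomBounded a := by
  obtain ⟨c, hc, η, hη0, hη1, hbound⟩ := hb
  exact ⟨c, hc, η, hη0, hη1, fun n => (h n).trans (hbound n)⟩

lemma of_norm_le_add_one_mul {a : ℕ → E} {b : ℕ → F} (hb : IsGeomBounded b)
    (h : ∀ n, ‖a n‖ ≤ ((n : ℝ) + 1) * ‖b n‖) : IsGeomBounded a := by
  obtain ⟨c, hc, η, hη0, hη1, hbound⟩ := hb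
  set θ := (1 + η) / 2 with hθ
  have hθ0 : 0 < θ := by positivity
  have hs1 : η / θ < 1 := by rw [div_lt_one hθ0]; linarith
  refine ⟨c / (1 - η / θ), div_pos hc (by linarith), θ, hθ0, by linarith, fun n => ?_⟩
  have hpow : η ^ n = (η / θ) ^ n * θ ^ n := by rw [← mul_pow, div_mul_cancel₀ _ hθ0.ne']
  calc ‖a n‖ ≤ ((n : ℝ) + 1) * (c * η ^ n) :=
        (h n).trans (mul_le_mul_of_nonneg_left (hbound n) (by positivity))
    _ = c * (((n : ℝ) + 1) * (η / θ) ^ n) * θ ^ n := by rw [hpow]; ring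
    _ ≤ c * (1 / (1 - η / θ)) * θ ^ n := by
        gcongr
        exact add_one_mul_pow_le_one_div_one_sub (by positivity) hs1 n
    _ = c / (1 - η / θ) * θ ^ n := by rw [mul_one_div]

lemma succ_iff {a : ℕ → E} : IsGeomBounded (fun n => a (n + 1)) ↔ IsGeomBounded a := by
  constructor
  · rintro ⟨c, hc, η, hη0, hη1, hbound⟩
    have hc' : 0 < max (c / η) ‖a 0‖ := lt_max_of_lt_left (by positivity)
    refine ⟨max (c / η) ‖a 0‖, hc', η, hη0, hη1, fun n => ?_⟩
    cases n with
    | zero => simp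
    | succ n =>
      calc ‖a (n + 1)‖ ≤ c * η ^ n := hbound n
        _ = c / η * η ^ (n + 1) := by rw [pow_succ]; field_simp
        _ ≤ max (c / η) ‖a 0‖ * η ^ (n + 1) := by gcongr; exact le_max_left _ _
  · rintro ⟨c, hc, η, hη0, hη1, hbound⟩
    refine ⟨c * η, by positivity, η, hη0, hη1, fun n => ?_⟩
    rw [mul_assoc, ← pow_succ']
    exact hbound _

end IsGeomBounded

section

variable {K : Type*} [Field K]

@[simp] lemma stmt11T_zero (a : ℕ → K) : stmt11T a 0 = 0 := rfl

@[simp] lemma stmt11T_succ (a : ℕ → K) (n : ℕ) :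
    stmt11T a (n + 1) = ((n + 1 : ℕ) : K) * a n :=
  rfl

lemma stmt11T_injective [CharZero K] : Function.Injective (stmt11T : (ℕ → K) → ℕ → K) :=
  fun _ _ h => funext fun n =>
    mul_left_cancel₀ (Nat.cast_ne_zero.mpr n.succ_ne_zero) (by simpa using congrFun h (n + 1))

def stmt11TInv (b : ℕ → K) : ℕ → K := fun n => b (n + 1) / ((n + 1 : ℕ) : K)

lemma eq_stmt11T_add_smul_delta_iff [CharZero K] (b a : ℕ → K) (l : K) :
    b = stmt11T a + l • stmt11delta ↔ a = stmt11TInv b ∧ l = b 0 := by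
  have hcast (n : ℕ) : (n + 1 : K) ≠ 0 := n.cast_add_one_ne_zero
  constructor
  · rintro rfl
    refine ⟨funext fun n => ?_, by simp [stmt11delta]⟩
    simp [stmt11TInv, stmt11delta, mul_div_cancel_left₀ _ (hcast n)]
  · rintro ⟨rfl, rfl⟩
    funext n
    cases n with
    | zero => simp [stmt11delta]
    | succ n => simp [stmt11TInv, stmt11delta, mul_div_cancel₀ _ (hcast n)]

end

section

variable {K : Type*} [NormedField K]

lemma isGeomBounded_stmt11T [IsUltrametricDist K] {a : ℕ → K} (ha : IsGeomBounded a) :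
    IsGeomBounded (stmt11T a) := by
  refine IsGeomBounded.succ_iff.mp (ha.mono fun n => ?_)
  rw [stmt11T_succ, norm_mul]
  exact mul_le_of_le_one_left (norm_nonneg _) (IsUltrametricDist.norm_natCast_le_one K _)

lemma isGeomBounded_stmt11TInv
    (hnorm : ∀ n : ℕ, 0 < n → 1 / (n : ℝ) ≤ ‖((n : ℕ) : K)‖) {b : ℕ → K}
    (hb : IsGeomBounded b) : IsGeomBounded (stmt11TInv b) := by
  refine (IsGeomBounded.succ_iff.mpr hb).of_norm_le_add_one_mul fun n => ?_
  have hn : ‖((n + 1 : ℕ) : K)‖⁻¹ ≤ (n : ℝ) + 1 :=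
    inv_le_of_inv_le₀ (by positivity) (by simpa using hnorm (n + 1) n.succ_pos)
  calc ‖stmt11TInv b n‖ = ‖b (n + 1)‖ * ‖((n + 1 : ℕ) : K)‖⁻¹ := by
        rw [stmt11TInv, norm_div, div_eq_mul_inv]
    _ ≤ ‖b (n + 1)‖ * ((n : ℝ) + 1) := by gcongr
    _ = ((n : ℝ) + 1) * ‖b (n + 1)‖ := mul_comm _ _

end

/-- Let `K` be a field of characteristic `0` with a nonarchimedean norm such
that `‖n‖ ≥ 1/n` for all positive integers `n`.  Let `V` be the set of sequences `a : ℕ → K`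
that are bounded by `c·ηⁿ` for some `c > 0` and `0 < η < 1`.  Then `T` maps `V` into `V`, `T`
is injective on `V`, and every `b ∈ V` can be written uniquely as `b = T a + λ • δ₀` with
`a ∈ V` and `λ ∈ K`. -/
theorem stmt_11 {K : Type*} [NormedField K] [CharZero K]
    (hultra : ∀ x y : K, ‖x + y‖ ≤ max ‖x‖ ‖y‖)
    (hnorm : ∀ n : ℕ, 0 < n → 1 / (n : ℝ) ≤ ‖((n : ℕ) : K)‖) :
    ∀ V : Set (ℕ → K),
      V = {a : ℕ → K | ∃ c : ℝ, 0 < c ∧ ∃ η : ℝ, 0 < η ∧ η < 1 ∧ ∀ n : ℕ, ‖a n‖ ≤ c * η ^ n} →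
      (∀ a ∈ V, stmt11T a ∈ V) ∧
      Set.InjOn stmt11T V ∧
      (∀ b ∈ V, ∃! p : (ℕ → K) × K,
        p.1 ∈ V ∧ b = stmt11T p.1 + p.2 • stmt11delta) := by
  rintro V rfl
  have : IsUltrametricDist K :=
    IsUltrametricDist.isUltrametricDist_of_forall_norm_add_le_max_norm hultra
  refine ⟨fun _ => isGeomBounded_stmt11T, stmt11T_injective.injOn, fun b hb => ?_⟩
  refine ⟨(stmt11TInv b, b 0), ⟨isGeomBounded_stmt11TInv hnorm hb, ?_⟩, ?_⟩
  · exact (eq_stmt11T_add_smul_delta_iff b _ _).mpr ⟨rfl, rfl⟩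
  · rintro ⟨a, l⟩ ⟨-, h⟩
    obtain ⟨rfl, rfl⟩ := (eq_stmt11T_add_smul_delta_iff b a l).mp h
    rfl
end
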